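/- Exchangeability coverage identity for HCP: Let Z̃_1,…,Z̃_{K+1} be a hierarchically exchangeable sequence in 𝒵̃ with group sizes N_k, let s : 𝒵 → ℝ be a fixed measurable score function, and let q : 𝒵̃^{K+1} → ℝ be a measurable function that is invariant under any permutation of its K+1 group arguments and under any permutation of the entries within any single group argument. Then P( s(Z_{K+1,1}) ≤ q(Z̃_1,…,Z̃_{K+1}) ) = E[ (1/(K+1)) Σ_{k=1}^{K+1} (1/N_k) Σ_{i=1}^{N_k} 1{ s(Z_{k,i}) ≤ q(Z̃_1,…,Z̃_{K+1}) } ]. -/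

import Mathlib

open MeasureTheory ProbabilityTheory
open scoped ENNReal

noncomputable section

/-- Extend a permutation of `Fin m` to `ℕ` by the identity outside `{0, …, m-1}`. -/
def permExt {m : ℕ} (σ : Equiv.Perm (Fin m)) : ℕ → ℕ :=
  fun i => if h : i < m then (σ ⟨i, h⟩ : ℕ) else i

/-- The representation of the groups `0, …, L-1` of a hierarchical data set:
group `k` is recorded as the pair of its size `N k ω` and its sequence of observations. -/
def hierData {Ω 𝒵 : Type*} (L : ℕ) (N : ℕ → Ω → ℕ) (Z : ℕ → ℕ → Ω → 𝒵) :
    Ω → Fin L → ℕ × (ℕ → 𝒵) :=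
  fun ω k => (N k.1 ω, fun i => Z k.1 i ω)

/-- Hierarchical exchangeability (Definition 1.1) of the groups `0, …, L-1`:
(i) the groups are exchangeable with each other, and (ii) for each `k` and each `m`
with `P(N_k = m) > 0`, conditionally on `N_k = m` the first `m` observations within
group `k` are exchangeable. -/
def HierExch {Ω 𝒵 : Type*} [MeasurableSpace Ω] [MeasurableSpace 𝒵] (L : ℕ)
    (P : Measure Ω) (N : ℕ → Ω → ℕ) (Z : ℕ → ℕ → Ω → 𝒵) : Prop :=
  (∀ σ : Equiv.Perm (Fin L),
      Measure.map (fun ω => fun k : Fin L => hierData L N Z ω (σ k)) P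
        = Measure.map (hierData L N Z) P) ∧
  (∀ k, k < L → ∀ m : ℕ, 0 < P {ω | N k ω = m} → ∀ σ : Equiv.Perm (Fin m),
      Measure.map
          (hierData L N fun k' i => if k' = k then Z k' (permExt σ i) else Z k' i)
          (ProbabilityTheory.cond P {ω | N k ω = m})
        = Measure.map (hierData L N Z) (ProbabilityTheory.cond P {ω | N k ω = m}))

/-- An algorithm (or function) of `L` groups is hierarchically symmetric if its output is
unchanged by any permutation of its `L` group arguments and by any permutation of the
entries within any single group argument. -/
def HierInvariant {𝒵 β : Type*} (L : ℕ) (q : (Fin L → ℕ × (ℕ → 𝒵)) → β) : Prop :=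
  (∀ (d : Fin L → ℕ × (ℕ → 𝒵)) (σ : Equiv.Perm (Fin L)), q (fun k => d (σ k)) = q d) ∧
  (∀ (d : Fin L → ℕ × (ℕ → 𝒵)) (k : Fin L) (σ : Equiv.Perm (Fin (d k).1)),
      q (Function.update d k ((d k).1, fun i => (d k).2 (permExt σ i))) = q d)

/-!
Fix a group `k`. Conditionally on `N_k = m`, swapping observations `0` and `i < m` of group `k`
preserves the law of the data and, by invariance, the value of `q`; hence on `{N_k = m}` every
observation of the group falls below `q` with the same probability, and the within-group average
`N_k⁻¹ ∑ᵢ 1{s(Z_{k,i}) ≤ q}` integrates to `P(s(Z_{k,0}) ≤ q)`. Swapping groups `k` and `K`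
shows that this probability does not depend on `k`, so the outer average over groups
integrates to `P(s(Z_{K,0}) ≤ q)`.
-/

section Averaging

variable {Ω : Type*} [MeasurableSpace Ω] {μ : Measure Ω}

lemma lintegral_eq_tsum_setLIntegral_fiber {N : Ω → ℕ} (hN : Measurable N) (f : Ω → ℝ≥0∞) :
    ∫⁻ ω, f ω ∂μ = ∑' m, ∫⁻ ω in N ⁻¹' {m}, f ω ∂μ := by
  have hcover : ⋃ m, N ⁻¹' {m} = Set.univ := by ext; simp
  have hdisj : Pairwise (Function.onFun Disjoint fun m => N ⁻¹' {m}) :=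
    fun _ _ hab => (Set.disjoint_singleton.2 hab).preimage N
  rw [← setLIntegral_univ, ← hcover,
    lintegral_iUnion (fun m => hN (measurableSet_singleton m)) hdisj]

lemma measurable_inv_mul_sum_range {N : Ω → ℕ} (hN : Measurable N) {f : ℕ → Ω → ℝ≥0∞}
    (hf : ∀ i, Measurable (f i)) :
    Measurable fun ω => (N ω : ℝ≥0∞)⁻¹ * ∑ i ∈ Finset.range (N ω), f i ω := by
  have hprod : Measurable fun p : Ω × ℕ => (p.2 : ℝ≥0∞)⁻¹ * ∑ i ∈ Finset.range p.2, f i p.1 :=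
    measurable_from_prod_countable_left fun n => by
      dsimp only
      exact (Finset.measurable_sum _ fun i _ => hf i).const_mul _
  exact hprod.comp (f := fun ω => (ω, N ω)) (measurable_id.prodMk hN)

theorem lintegral_inv_mul_sum_range_eq {N : Ω → ℕ} (hN : Measurable N) (hN_pos : ∀ ω, 0 < N ω)
    {f : ℕ → Ω → ℝ≥0∞} (hf : ∀ i, Measurable (f i))
    (hfiber : ∀ m, ∀ i < m, ∫⁻ ω in N ⁻¹' {m}, f i ω ∂μ = ∫⁻ ω in N ⁻¹' {m}, f 0 ω ∂μ) :
    ∫⁻ ω, (N ω : ℝ≥0∞)⁻¹ * ∑ i ∈ Finset.range (N ω), f i ω ∂μ = ∫⁻ ω, f 0 ω ∂μ := by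
  rw [lintegral_eq_tsum_setLIntegral_fiber hN, lintegral_eq_tsum_setLIntegral_fiber hN]
  refine tsum_congr fun m => ?_
  rcases m.eq_zero_or_pos with rfl | hm
  · have hempty : N ⁻¹' {0} = ∅ :=
      Set.eq_empty_of_forall_notMem fun ω hω => (hN_pos ω).ne' hω
    simp [hempty]
  calc ∫⁻ ω in N ⁻¹' {m}, (N ω : ℝ≥0∞)⁻¹ * ∑ i ∈ Finset.range (N ω), f i ω ∂μ
      = ∫⁻ ω in N ⁻¹' {m}, (m : ℝ≥0∞)⁻¹ * ∑ i ∈ Finset.range m, f i ω ∂μ :=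
        setLIntegral_congr_fun (hN (measurableSet_singleton m)) fun ω hω => by
          rw [show N ω = m from hω]
    _ = (m : ℝ≥0∞)⁻¹ * ∑ i ∈ Finset.range m, ∫⁻ ω in N ⁻¹' {m}, f i ω ∂μ := by
        rw [lintegral_const_mul' _ _ (by simpa using hm.ne'),
          lintegral_finsetSum _ fun i _ => hf i]
    _ = (m : ℝ≥0∞)⁻¹ * ∑ _i ∈ Finset.range m, ∫⁻ ω in N ⁻¹' {m}, f 0 ω ∂μ := by
        rw [Finset.sum_congr rfl fun i hi => hfiber m i (Finset.mem_range.1 hi)]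
    _ = ∫⁻ ω in N ⁻¹' {m}, f 0 ω ∂μ := by
        rw [Finset.sum_const, Finset.card_range, nsmul_eq_mul, ← mul_assoc,
          ENNReal.inv_mul_cancel (by exact_mod_cast hm.ne') (ENNReal.natCast_ne_top m), one_mul]

lemma measure_inter_preimage_eq_of_map_cond_eq [IsFiniteMeasure μ] {α : Type*}
    [MeasurableSpace α] {B : Set Ω} (hB : MeasurableSet B) {f g : Ω → α} (hf : Measurable f)
    (hg : Measurable g) (hfg : 0 < μ B → (μ[|B]).map f = (μ[|B]).map g) {S : Set α}
    (hS : MeasurableSet S) : μ (B ∩ f ⁻¹' S) = μ (B ∩ g ⁻¹' S) := by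
  rw [← cond_mul_eq_inter hB, ← cond_mul_eq_inter hB]
  rcases eq_zero_or_pos (μ B) with h0 | hpos
  · simp [h0]
  · rw [← Measure.map_apply hf hS, ← Measure.map_apply hg hS, hfg hpos]

end Averaging

section Hierarchical

variable {Ω 𝒵 : Type*} {L : ℕ}

def scoreLe (s : 𝒵 → ℝ) (q : (Fin L → ℕ × (ℕ → 𝒵)) → ℝ) (k : Fin L) (i : ℕ) :
    Set (Fin L → ℕ × (ℕ → 𝒵)) :=
  {d | s ((d k).2 i) ≤ q d}

lemma measurableSet_scoreLe [MeasurableSpace 𝒵] {s : 𝒵 → ℝ} (hs : Measurable s)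
    {q : (Fin L → ℕ × (ℕ → 𝒵)) → ℝ} (hq : Measurable q) (k : Fin L) (i : ℕ) :
    MeasurableSet (scoreLe s q k i) :=
  measurableSet_le (hs.comp ((measurable_pi_apply i).comp
    (measurable_snd.comp (measurable_pi_apply k)))) hq

lemma measurable_hierData [MeasurableSpace Ω] [MeasurableSpace 𝒵] {N : ℕ → Ω → ℕ}
    {Z : ℕ → ℕ → Ω → 𝒵} (hN : ∀ k, Measurable (N k)) (hZ : ∀ k i, Measurable (Z k i)) :
    Measurable (hierData L N Z) :=
  measurable_pi_lambda _ fun k => (hN k).prodMk (measurable_pi_lambda _ fun i => hZ k i)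

lemma permExt_apply_of_lt {m : ℕ} (σ : Equiv.Perm (Fin m)) {i : ℕ} (hi : i < m) :
    permExt σ i = σ ⟨i, hi⟩ :=
  dif_pos hi

lemma hierData_permute_within (N : ℕ → Ω → ℕ) (Z : ℕ → ℕ → Ω → 𝒵) (k : Fin L) {m : ℕ}
    (σ : Equiv.Perm (Fin m)) (ω : Ω) :
    hierData L N (fun k' i => if k' = k then Z k' (permExt σ i) else Z k' i) ω =
      Function.update (hierData L N Z ω) k (N k ω, fun i => Z k (permExt σ i) ω) := by
  funext k'
  by_cases h : k' = k
  · subst h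
    simp [hierData]
  · simp [hierData, h, Fin.val_ne_of_ne h]

lemma HierInvariant.apply_hierData_permute_within {β : Type*}
    {q : (Fin L → ℕ × (ℕ → 𝒵)) → β} (hq : HierInvariant L q) (N : ℕ → Ω → ℕ)
    (Z : ℕ → ℕ → Ω → 𝒵) (k : Fin L) {m : ℕ} (σ : Equiv.Perm (Fin m)) {ω : Ω}
    (hm : N k ω = m) :
    q (hierData L N (fun k' i => if k' = k then Z k' (permExt σ i) else Z k' i) ω) =
      q (hierData L N Z ω) := by
  subst hm
  exact (congrArg q (hierData_permute_within N Z k σ ω)).trans (hq.2 (hierData L N Z ω) k σ)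

end Hierarchical

section Exchangeability

variable {Ω 𝒵 : Type*} [MeasurableSpace Ω] [MeasurableSpace 𝒵] {L : ℕ} {P : Measure Ω}
  {N : ℕ → Ω → ℕ} {Z : ℕ → ℕ → Ω → 𝒵} {s : 𝒵 → ℝ} {q : (Fin L → ℕ × (ℕ → 𝒵)) → ℝ}

lemma HierExch.measure_scoreLe_eq (hexch : HierExch L P N Z)
    (hNmeas : ∀ k, Measurable (N k)) (hZmeas : ∀ k i, Measurable (Z k i))
    (hs : Measurable s) (hq : Measurable q) (hqinv : HierInvariant L q) (j k : Fin L) (i : ℕ) :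
    P (hierData L N Z ⁻¹' scoreLe s q j i) = P (hierData L N Z ⁻¹' scoreLe s q k i) := by
  have hD : Measurable (hierData L N Z) := measurable_hierData hNmeas hZmeas
  have hDσ : Measurable fun ω k' => hierData L N Z ω (Equiv.swap j k k') :=
    measurable_pi_lambda _ fun k' => (measurable_pi_apply _).comp hD
  have hswap : (fun ω k' => hierData L N Z ω (Equiv.swap j k k')) ⁻¹' scoreLe s q k i =
      hierData L N Z ⁻¹' scoreLe s q j i := by
    ext ω
    simp only [Set.mem_preimage, scoreLe, Set.mem_ofPred_eq, Equiv.swap_apply_right, hqinv.1]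
  rw [← hswap, ← Measure.map_apply hDσ (measurableSet_scoreLe hs hq k i), hexch.1,
    Measure.map_apply hD (measurableSet_scoreLe hs hq k i)]

lemma HierExch.measure_fiber_inter_scoreLe_eq [IsFiniteMeasure P] (hexch : HierExch L P N Z)
    (hNmeas : ∀ k, Measurable (N k)) (hZmeas : ∀ k i, Measurable (Z k i))
    (hs : Measurable s) (hq : Measurable q) (hqinv : HierInvariant L q) {k : ℕ} (hk : k < L)
    {m i : ℕ} (hi : i < m) :
    P (N k ⁻¹' {m} ∩ hierData L N Z ⁻¹' scoreLe s q ⟨k, hk⟩ i) =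
      P (N k ⁻¹' {m} ∩ hierData L N Z ⁻¹' scoreLe s q ⟨k, hk⟩ 0) := by
  set σ : Equiv.Perm (Fin m) := Equiv.swap ⟨0, by omega⟩ ⟨i, hi⟩
  set Z' : ℕ → ℕ → Ω → 𝒵 := fun k' j => if k' = k then Z k' (permExt σ j) else Z k' j
  have hZ' : ∀ k' j, Measurable (Z' k' j) := fun k' j => by
    dsimp only [Z']
    split_ifs <;> exact hZmeas _ _
  have hrelabel : N k ⁻¹' {m} ∩ hierData L N Z' ⁻¹' scoreLe s q ⟨k, hk⟩ i =
      N k ⁻¹' {m} ∩ hierData L N Z ⁻¹' scoreLe s q ⟨k, hk⟩ 0 := by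
    ext ω
    refine and_congr_right fun hω => ?_
    show s (Z' k i ω) ≤ q (hierData L N Z' ω) ↔ s (Z k 0 ω) ≤ q (hierData L N Z ω)
    rw [hqinv.apply_hierData_permute_within N Z ⟨k, hk⟩ σ hω]
    simp [Z', permExt_apply_of_lt σ hi, σ]
  rw [measure_inter_preimage_eq_of_map_cond_eq (hNmeas k (measurableSet_singleton m))
    (measurable_hierData hNmeas hZmeas) (measurable_hierData hNmeas hZ')
    (fun hpos => (hexch.2 k hk m hpos σ).symm) (measurableSet_scoreLe hs hq _ i), hrelabel]

theorem HierExch.lintegral_groupAverage_eq [IsFiniteMeasure P] (hexch : HierExch L P N Z)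
    (hN : ∀ k ω, 1 ≤ N k ω) (hNmeas : ∀ k, Measurable (N k)) (hZmeas : ∀ k i, Measurable (Z k i))
    (hs : Measurable s) (hq : Measurable q) (hqinv : HierInvariant L q) {k : ℕ} (hk : k < L) :
    ∫⁻ ω, (N k ω : ℝ≥0∞)⁻¹ * ∑ i ∈ Finset.range (N k ω),
        (if s (Z k i ω) ≤ q (hierData L N Z ω) then (1 : ℝ≥0∞) else 0) ∂P =
      P (hierData L N Z ⁻¹' scoreLe s q ⟨k, hk⟩ 0) := by
  have hD : Measurable (hierData L N Z) := measurable_hierData hNmeas hZmeas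
  have hA : ∀ i, MeasurableSet (hierData L N Z ⁻¹' scoreLe s q ⟨k, hk⟩ i) :=
    fun i => hD (measurableSet_scoreLe hs hq _ i)
  have hind : ∀ i ω, (if s (Z k i ω) ≤ q (hierData L N Z ω) then (1 : ℝ≥0∞) else 0) =
      (hierData L N Z ⁻¹' scoreLe s q ⟨k, hk⟩ i).indicator 1 ω := fun i ω => by
    by_cases h : s (Z k i ω) ≤ q (hierData L N Z ω) <;> simp [h, scoreLe, hierData]
  simp_rw [hind]
  rw [lintegral_inv_mul_sum_range_eq (hNmeas k) (hN k) (fun i => measurable_one.indicator (hA i)),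
    lintegral_indicator_one (hA 0)]
  intro m i hi
  rw [lintegral_indicator_one (hA i), lintegral_indicator_one (hA 0),
    Measure.restrict_apply (hA i), Measure.restrict_apply (hA 0), Set.inter_comm,
    hexch.measure_fiber_inter_scoreLe_eq hNmeas hZmeas hs hq hqinv hk hi, Set.inter_comm]

end Exchangeability

/-- **Lemma (Exchangeability coverage identity for HCP).**
For a hierarchically exchangeable sequence of groups, a fixed measurable score `s` and a
measurable, hierarchically invariant function `q` of the full data set,
`P(s(Z_{K+1,1}) ≤ q) = E[(1/(K+1)) Σ_k (1/N_k) Σ_i 1{s(Z_{k,i}) ≤ q}]`. -/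
theorem hcp_exchangeability_identity
    {𝒵 Ω : Type*} [MeasurableSpace 𝒵] [MeasurableSpace Ω]
    (P : Measure Ω) [IsProbabilityMeasure P]
    (K : ℕ)
    (N : ℕ → Ω → ℕ) (Z : ℕ → ℕ → Ω → 𝒵)
    (hN : ∀ k ω, 1 ≤ N k ω)
    (hNmeas : ∀ k, Measurable (N k)) (hZmeas : ∀ k i, Measurable (Z k i))
    (hexch : HierExch (K + 1) P N Z)
    (s : 𝒵 → ℝ) (hs : Measurable s)
    (q : (Fin (K + 1) → ℕ × (ℕ → 𝒵)) → ℝ) (hq : Measurable q)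
    (hqinv : HierInvariant (K + 1) q) :
    P {ω | s (Z K 0 ω) ≤ q (hierData (K + 1) N Z ω)} =
      ∫⁻ ω, (((K + 1 : ℕ) : ℝ≥0∞))⁻¹ *
        ∑ k ∈ Finset.range (K + 1), ((N k ω : ℝ≥0∞))⁻¹ *
          ∑ i ∈ Finset.range (N k ω),
            (if s (Z k i ω) ≤ q (hierData (K + 1) N Z ω) then (1 : ℝ≥0∞) else 0) ∂P := by
  have hD : Measurable (hierData (K + 1) N Z) := measurable_hierData hNmeas hZmeas
  have hgroup_meas : ∀ k, Measurable fun ω => ((N k ω : ℝ≥0∞))⁻¹ *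
      ∑ i ∈ Finset.range (N k ω),
        (if s (Z k i ω) ≤ q (hierData (K + 1) N Z ω) then (1 : ℝ≥0∞) else 0) := fun k =>
    measurable_inv_mul_sum_range (hNmeas k) fun i =>
      Measurable.ite (measurableSet_le (hs.comp (hZmeas k i)) (hq.comp hD)) measurable_const
        measurable_const
  have hgroup : ∀ k ∈ Finset.range (K + 1), ∫⁻ ω, ((N k ω : ℝ≥0∞))⁻¹ *
      ∑ i ∈ Finset.range (N k ω),
        (if s (Z k i ω) ≤ q (hierData (K + 1) N Z ω) then (1 : ℝ≥0∞) else 0) ∂P =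
      P (hierData (K + 1) N Z ⁻¹' scoreLe s q (Fin.last K) 0) := fun k hk =>
    (hexch.lintegral_groupAverage_eq hN hNmeas hZmeas hs hq hqinv (Finset.mem_range.1 hk)).trans
      (hexch.measure_scoreLe_eq hNmeas hZmeas hs hq hqinv _ _ 0)
  rw [lintegral_const_mul' _ _ (by simp), lintegral_finsetSum _ fun k _ => hgroup_meas k,
    Finset.sum_congr rfl hgroup, Finset.sum_const, Finset.card_range, nsmul_eq_mul, ← mul_assoc,
    ENNReal.inv_mul_cancel (by simp) (by simp), one_mul]
  rfl
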